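/- Let n ≥ 1 and λ ∈ ℝ, and let ψ : ℝ → ℂ be smooth on (−π, π), even, with ψ(0) = 1, satisfying ψ″(r) + 2n·(cos r/sin r)·ψ′(r) = (λ² + n²)·ψ(r) for all 0 < |r| < π. Let D̃* = L̃^n be the n-fold iterate of (L̃g)(r) = −(1/(2π))·g′(r)/sin r. Then for all r with 0 < |r| < π: (D̃*(cosh(λ·)))(r) = c_{λ,n}·ψ(r), where c_{λ,n} = (−2π)^{−n}·∏_{k=0}^{n−1} (λ² + k²)/(2k+1). -/

import Mathlib

/-!
The iterates `F_m = L̃^m (cosh (λ ·))` continue to even real-analytic functions on `(-π, π)`: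
`F_m'` is odd, so `F_m' / sin` has a removable singularity at `0`. With the radial Laplacian
`Δ_m = d²/dr² + 2m cot r · d/dr` of `S^{2m+1}` one has the intertwining relation
`Δ_{m+1} ∘ L̃ = L̃ ∘ Δ_m + (2m+1) L̃`, so `Δ_0 cosh (λ ·) = λ² cosh (λ ·)` propagates to
`Δ_m F_m = (λ² + m²) F_m`. Letting `r → 0` in this equation gives
`(2m+1) F_m''(0) = (λ² + m²) F_m(0)`, hence `F_{m+1}(0) = -(1/2π) (λ² + m²)/(2m+1) F_m(0)` and
`F_n(0) = c_{λ,n}`.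

Thus `F_n` and `c_{λ,n} ψ` are even solutions of `Δ_n u = (λ² + n²) u` with the same value at `0`.
The equation is singular at `0`, but its damping coefficient `2n cot r` is bounded below on
`(0, b]`, which is all an energy estimate needs: `|u|² + |u'|²` of the difference satisfies a
Grönwall inequality and vanishes.
-/

/-- The operator `L̃` given by `(L̃ g)(r) = -(1/(2π)) g'(r)/sin r`. -/
noncomputable def Lsph (g : ℝ → ℂ) : ℝ → ℂ :=
  fun r => -(1 / (2 * (Real.pi : ℂ))) * deriv g r / (Real.sin r : ℂ)

/-- `c_{λ,n} = (-2π)^{-n} ∏_{k=0}^{n-1} (λ² + k²)/(2k+1)`. -/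
noncomputable def cln (n : ℕ) (lam : ℝ) : ℝ :=
  ((-(2 * Real.pi)) ^ n)⁻¹ * ∏ k ∈ Finset.range n, (lam ^ 2 + (k : ℝ) ^ 2) / (2 * k + 1)

open Real Set Filter Topology

section Calculus

variable {𝕜 E 𝕝 : Type*} [NontriviallyNormedField 𝕜] [NormedAddCommGroup E] [NormedSpace 𝕜 E]
  [NormedField 𝕝] [NormedAlgebra 𝕜 𝕝]

@[fun_prop]
theorem AnalyticAt.ofReal {f : ℝ → ℝ} {x : ℝ} (hf : AnalyticAt ℝ f x) :
    AnalyticAt ℝ (fun y => (f y : ℂ)) x :=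
  Complex.ofRealCLM.analyticAt _ |>.comp hf

theorem analyticAt_dslope {f : 𝕜 → E} {a b : 𝕜} (hf : AnalyticAt 𝕜 f b) :
    AnalyticAt 𝕜 (dslope f a) b := by
  rcases eq_or_ne b a with rfl | hb
  · obtain ⟨p, hp⟩ := hf
    exact ⟨_, hp.has_fpower_series_dslope_fslope⟩
  · refine AnalyticAt.congr ?_ (dslope_eventuallyEq_slope_of_ne f hb).symm
    simp only [slope_fun_def, vsub_eq_sub]
    exact ((analyticAt_id.sub analyticAt_const).inv (sub_ne_zero.mpr hb)).smul
      (hf.sub analyticAt_const)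

/-- Removable singularity of `f / g` at a common zero `a` of `f` and `g`, simple for `g`. -/
theorem AnalyticOnNhd.dslope_div_dslope {f g : 𝕜 → 𝕝} {U : Set 𝕜} {a : 𝕜}
    (hf : AnalyticOnNhd 𝕜 f U) (hg : AnalyticOnNhd 𝕜 g U)
    (hne : ∀ x ∈ U, x ≠ a → g x ≠ g a) (hg' : deriv g a ≠ 0) :
    AnalyticOnNhd 𝕜 (fun x => dslope f a x / dslope g a x) U := by
  refine fun x hx => (analyticAt_dslope (hf x hx)).div (analyticAt_dslope (hg x hx)) ?_
  rcases eq_or_ne x a with rfl | hxa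
  · rwa [dslope_same]
  · rw [dslope_of_ne _ hxa, slope_def_module]
    exact smul_ne_zero (inv_ne_zero (sub_ne_zero.mpr hxa)) (sub_ne_zero.mpr (hne x hx hxa))

theorem dslope_div_dslope_of_ne {f g : 𝕜 → 𝕝} {a b : 𝕜} (hf : f a = 0) (hg : g a = 0)
    (hb : b ≠ a) : dslope f a b / dslope g a b = f b / g b := by
  have : algebraMap 𝕜 𝕝 (b - a)⁻¹ ≠ 0 :=
    (map_ne_zero _).mpr (inv_ne_zero (sub_ne_zero.mpr hb))
  rw [dslope_of_ne _ hb, dslope_of_ne _ hb, slope_def_module, slope_def_module, hf, hg, sub_zero,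
    sub_zero, Algebra.smul_def, Algebra.smul_def, mul_div_mul_left _ _ this]

theorem Function.Even.deriv {f : 𝕜 → E} (hf : f.Even) : (deriv f).Odd := fun x => by
  simpa only [neg_neg, hf.eq] using deriv_comp_neg (f := f) (x := -x)

theorem Function.Odd.dslope_zero [IsAddTorsionFree E] {f : 𝕜 → E} (hf : f.Odd) :
    (dslope f 0).Even := fun x => by
  rcases eq_or_ne x 0 with rfl | hx
  · rw [neg_zero]
  rw [dslope_of_ne _ hx, dslope_of_ne _ (neg_ne_zero.mpr hx), slope_def_module, slope_def_module,
    hf.eq, hf.map_zero, sub_zero, sub_zero, sub_zero, sub_zero, inv_neg, neg_smul_neg]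

end Calculus

theorem eqOn_zero_of_hasDerivAt_of_damped {E : Type*} [NormedAddCommGroup E]
    [InnerProductSpace ℝ E] {u u' u'' : ℝ → E} {μ : ℝ → ℝ} {ν M a b : ℝ}
    (hu : ∀ x ∈ Icc a b, HasDerivAt u (u' x) x) (hu' : ∀ x ∈ Icc a b, HasDerivAt u' (u'' x) x)
    (hode : ∀ x ∈ Ioc a b, u'' x = ν • u x - μ x • u' x) (hμ : ∀ x ∈ Ioc a b, M ≤ μ x)
    (ha : u a = 0) (ha' : u' a = 0) : EqOn u 0 (Icc a b) := by
  have hE : ∀ x ∈ Icc a b, HasDerivAt (fun x => ‖u x‖ ^ 2 + ‖u' x‖ ^ 2)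
      (2 * inner ℝ (u x) (u' x) + 2 * inner ℝ (u' x) (u'' x)) x :=
    fun x hx => (hu x hx).norm_sq.add (hu' x hx).norm_sq
  have hbound : ∀ x ∈ Ico a b, 2 * inner ℝ (u x) (u' x) + 2 * inner ℝ (u' x) (u'' x)
      ≤ (1 + |ν| + 2 * |M|) * (‖u x‖ ^ 2 + ‖u' x‖ ^ 2) + 0 := by
    rintro x ⟨hax, hxb⟩
    rcases hax.eq_or_lt with rfl | hax
    · simp [ha, ha']
    have hx : x ∈ Ioc a b := ⟨hax, hxb.le⟩
    rw [hode x hx, inner_sub_right, real_inner_smul_right, real_inner_smul_right,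
      real_inner_self_eq_norm_sq, real_inner_comm (u x)]
    have hcs : (1 + ν) * inner ℝ (u x) (u' x) ≤ (1 + |ν|) * (‖u x‖ * ‖u' x‖) :=
      (le_abs_self _).trans <| by
        rw [abs_mul]
        gcongr
        · exact (abs_add_le _ _).trans (by simp)
        · exact abs_real_inner_le_norm _ _
    have hμx : -|M| * ‖u' x‖ ^ 2 ≤ μ x * ‖u' x‖ ^ 2 := by
      gcongr
      exact (neg_abs_le M).trans (hμ x hx)
    have hamgm : 0 ≤ (1 + |ν|) * (‖u x‖ - ‖u' x‖) ^ 2 := by positivity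
    have hMu : 0 ≤ |M| * ‖u x‖ ^ 2 := by positivity
    linarith
  intro x hx
  have hEx := le_gronwallBound_of_liminf_deriv_right_le (δ := 0)
    (fun y hy => (hE y hy).continuousAt.continuousWithinAt)
    (fun y hy _ hr => (hE y (Ico_subset_Icc_self hy)).hasDerivWithinAt.liminf_right_slope_le hr)
    (by simp [ha, ha']) hbound x hx
  rw [gronwallBound_ε0_δ0] at hEx
  have hux : ‖u x‖ ^ 2 = 0 := le_antisymm (by linarith [sq_nonneg ‖u' x‖]) (sq_nonneg _)
  exact norm_eq_zero.mp (pow_eq_zero_iff two_ne_zero |>.mp hux)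

theorem hasDerivAt_ofReal_sin (x : ℝ) : HasDerivAt (fun t : ℝ => (sin t : ℂ)) (cos x) x :=
  (hasDerivAt_sin x).ofReal_comp

theorem hasDerivAt_ofReal_cos (x : ℝ) : HasDerivAt (fun t : ℝ => (cos t : ℂ)) (-sin x) x := by
  simpa using (hasDerivAt_cos x).ofReal_comp

theorem cos_div_sin_le_cos_div_sin {x y : ℝ} (hx : 0 < x) (hxy : x ≤ y) (hy : y < π) :
    cos y / sin y ≤ cos x / sin x := by
  rw [div_le_div_iff₀ (sin_pos_of_pos_of_lt_pi (hx.trans_le hxy) hy)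
    (sin_pos_of_pos_of_lt_pi hx (hxy.trans_lt hy))]
  have := sin_nonneg_of_nonneg_of_le_pi (sub_nonneg.mpr hxy) (by linarith)
  rw [sin_sub] at this
  linarith

/-- The radial part `d²/dr² + 2m cot r · d/dr` of the Laplacian of the sphere `S^{2m+1}`. -/
noncomputable def radialLap (m : ℕ) (F : ℝ → ℂ) (r : ℝ) : ℂ :=
  deriv (deriv F) r + 2 * (m : ℂ) * ((cos r : ℂ) / (sin r : ℂ)) * deriv F r

theorem Filter.EventuallyEq.radialLap_eq {F G : ℝ → ℂ} {r : ℝ} (h : F =ᶠ[𝓝 r] G) (m : ℕ) :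
    radialLap m F r = radialLap m G r := by
  rw [radialLap, radialLap, h.deriv.deriv_eq, h.deriv_eq]

theorem radialLap_const_mul (m : ℕ) (c : ℂ) (F : ℝ → ℂ) (r : ℝ) :
    radialLap m (fun s => c * F s) r = c * radialLap m F r := by
  simp only [radialLap, deriv_const_mul_field']
  ring

theorem radialLap_succ_Lsph {F : ℝ → ℂ} {r : ℝ} (m : ℕ) (hF : AnalyticAt ℝ F r)
    (hr : sin r ≠ 0) :
    radialLap (m + 1) (Lsph F) r = Lsph (radialLap m F) r + (2 * m + 1) * Lsph F r := by
  have hsin : ∀ᶠ t in 𝓝 r, (sin t : ℂ) ≠ 0 :=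
    (continuous_sin.continuousAt.eventually_ne hr).mono fun t ht => by exact_mod_cast ht
  have hL : deriv (Lsph F) =ᶠ[𝓝 r] fun t => -(1 / (2 * (π : ℂ))) *
      ((deriv (deriv F) t * sin t - deriv F t * cos t) / (sin t : ℂ) ^ 2) := by
    filter_upwards [hF.eventually_analyticAt, hsin] with t ht hst
    refine HasDerivAt.deriv ?_
    unfold Lsph
    simpa only [mul_div_assoc] using (ht.deriv.differentiableAt.hasDerivAt.fun_div
      (hasDerivAt_ofReal_sin t) hst).const_mul (-(1 / (2 * (π : ℂ))))
  have hF1 := hF.deriv.differentiableAt.hasDerivAt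
  have hF2 := hF.deriv.deriv.differentiableAt.hasDerivAt
  have hs := hasDerivAt_ofReal_sin r
  have hc := hasDerivAt_ofReal_cos r
  have hsr : (sin r : ℂ) ≠ 0 := by exact_mod_cast hr
  have hLL := (((hF2.fun_mul hs).fun_sub (hF1.fun_mul hc)).fun_div (hs.fun_pow 2)
    (pow_ne_zero 2 hsr)).const_mul (-(1 / (2 * (π : ℂ))))
  have hΔ : HasDerivAt (radialLap m F) _ r :=
    hF2.fun_add (((hc.fun_div hs hsr).const_mul (2 * (m : ℂ))).fun_mul hF1)
  simp only [radialLap, Lsph, hL.deriv_eq, hL.eq_of_nhds]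
  rw [hLL.deriv, hΔ.deriv]
  generalize (sin r : ℂ) = S at *
  generalize (cos r : ℂ) = C at *
  have hπ : (π : ℂ) ≠ 0 := by exact_mod_cast pi_ne_zero
  push_cast
  field_simp
  ring

theorem eqOn_of_radialLap_eq {f g : ℝ → ℂ} {m : ℕ} {ν b : ℝ} (hb : b < π)
    (hf : ∀ x ∈ Icc 0 b, DifferentiableAt ℝ f x ∧ DifferentiableAt ℝ (deriv f) x)
    (hg : ∀ x ∈ Icc 0 b, DifferentiableAt ℝ g x ∧ DifferentiableAt ℝ (deriv g) x)
    (hfode : ∀ x ∈ Ioc 0 b, radialLap m f x = ν * f x)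
    (hgode : ∀ x ∈ Ioc 0 b, radialLap m g x = ν * g x)
    (h0 : f 0 = g 0) (h0' : deriv f 0 = deriv g 0) : EqOn f g (Icc 0 b) := by
  have hcot (x : ℝ) (hx : x ∈ Ioc 0 b) : 2 * m * (cos b / sin b) ≤ 2 * m * (cos x / sin x) :=
    mul_le_mul_of_nonneg_left (cos_div_sin_le_cos_div_sin hx.1 hx.2 hb) (by positivity)
  have hode (x : ℝ) (hx : x ∈ Ioc 0 b) : deriv (deriv f) x - deriv (deriv g) x
      = ν • (f x - g x) - (2 * m * (cos x / sin x)) • (deriv f x - deriv g x) := by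
    have hf := hfode x hx
    have hg := hgode x hx
    simp only [radialLap] at hf hg
    simp only [Complex.real_smul, Complex.ofReal_mul, Complex.ofReal_div, Complex.ofReal_ofNat,
      Complex.ofReal_natCast]
    linear_combination hf - hg
  have := eqOn_zero_of_hasDerivAt_of_damped (u := fun x => f x - g x)
    (fun x hx => (hf x hx).1.hasDerivAt.sub (hg x hx).1.hasDerivAt)
    (fun x hx => (hf x hx).2.hasDerivAt.sub (hg x hx).2.hasDerivAt) hode hcot
    (sub_eq_zero.mpr h0) (sub_eq_zero.mpr h0')
  exact fun x hx => sub_eq_zero.mp (this hx)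

theorem eqOn_of_radialLap_eq_of_even {f g : ℝ → ℂ} {m : ℕ} {ν : ℝ}
    (hf : ∀ x ∈ Ioo (-π) π, DifferentiableAt ℝ f x ∧ DifferentiableAt ℝ (deriv f) x)
    (hg : ∀ x ∈ Ioo (-π) π, DifferentiableAt ℝ g x ∧ DifferentiableAt ℝ (deriv g) x)
    (hfe : f.Even) (hge : g.Even) (hfode : ∀ x ∈ Ioo 0 π, radialLap m f x = ν * f x)
    (hgode : ∀ x ∈ Ioo 0 π, radialLap m g x = ν * g x) (h0 : f 0 = g 0) :
    EqOn f g (Ioo (-π) π) := by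
  intro x hx
  have hb : |x| < π := abs_lt.mpr hx
  have hI : Icc 0 |x| ⊆ Ioo (-π) π := fun y hy => ⟨by linarith [hy.1, pi_pos], hy.2.trans_lt hb⟩
  have hI' : Ioc 0 |x| ⊆ Ioo 0 π := fun y hy => ⟨hy.1, hy.2.trans_lt hb⟩
  have := eqOn_of_radialLap_eq hb (fun y hy => hf y (hI hy)) (fun y hy => hg y (hI hy))
    (fun y hy => hfode y (hI' hy)) (fun y hy => hgode y (hI' hy)) h0
    (by rw [hfe.deriv.map_zero, hge.deriv.map_zero]) ⟨abs_nonneg x, le_rfl⟩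
  rcases abs_choice x with h | h <;> rw [h] at this
  · exact this
  · rwa [hfe.eq, hge.eq] at this

/-- `g r / sin r`, continued across the zero of `sin` at the origin. -/
noncomputable def divSin (g : ℝ → ℂ) (r : ℝ) : ℂ :=
  dslope g 0 r / dslope (fun t => (sin t : ℂ)) 0 r

theorem divSin_of_ne {g : ℝ → ℂ} (hg : g 0 = 0) {r : ℝ} (hr : r ≠ 0) :
    divSin g r = g r / sin r :=
  dslope_div_dslope_of_ne hg (by simp) hr

theorem divSin_zero (g : ℝ → ℂ) : divSin g 0 = deriv g 0 := by
  rw [divSin, dslope_same, dslope_same, (hasDerivAt_ofReal_sin 0).deriv, cos_zero,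
    Complex.ofReal_one, div_one]

theorem Function.Odd.divSin {g : ℝ → ℂ} (hg : g.Odd) : (divSin g).Even := fun r => by
  have hsin : (fun t : ℝ => (sin t : ℂ)).Odd := fun t => by simp [sin_neg]
  simp only [_root_.divSin, hg.dslope_zero.eq, hsin.dslope_zero.eq]

theorem AnalyticOnNhd.divSin {g : ℝ → ℂ} (hg : AnalyticOnNhd ℝ g (Ioo (-π) π)) :
    AnalyticOnNhd ℝ (divSin g) (Ioo (-π) π) :=
  hg.dslope_div_dslope (fun x _ => by fun_prop)
    (fun x hx hx0 => by
      rw [sin_zero, Complex.ofReal_zero, Complex.ofReal_ne_zero]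
      exact fun h => hx0 ((sin_eq_zero_iff_of_lt_of_lt hx.1 hx.2).mp h))
    (by rw [(hasDerivAt_ofReal_sin 0).deriv, cos_zero, Complex.ofReal_one]; exact one_ne_zero)

noncomputable def LsphExt (F : ℝ → ℂ) (r : ℝ) : ℂ :=
  -(1 / (2 * (π : ℂ))) * divSin (deriv F) r

theorem Function.Even.LsphExt {F : ℝ → ℂ} (hF : F.Even) : (LsphExt F).Even := fun r => by
  simp only [_root_.LsphExt, hF.deriv.divSin.eq]

theorem LsphExt_eq_Lsph {F : ℝ → ℂ} (hF : F.Even) {r : ℝ} (hr : r ≠ 0) :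
    LsphExt F r = Lsph F r := by
  rw [LsphExt, Lsph, divSin_of_ne hF.deriv.map_zero hr, mul_div_assoc]

theorem AnalyticOnNhd.LsphExt {F : ℝ → ℂ} (hF : AnalyticOnNhd ℝ F (Ioo (-π) π)) :
    AnalyticOnNhd ℝ (LsphExt F) (Ioo (-π) π) :=
  fun x hx => analyticAt_const.mul (hF.deriv.divSin x hx)

theorem LsphExt_zero {F : ℝ → ℂ} {m : ℕ} {ν : ℂ} (hFa : AnalyticOnNhd ℝ F (Ioo (-π) π))
    (hFe : F.Even) (hode : ∀ r ∈ Ioo (-π) π, r ≠ 0 → radialLap m F r = ν * F r) :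
    LsphExt F 0 = -(1 / (2 * (π : ℂ))) * (ν / (2 * m + 1)) * F 0 := by
  have h0 : (0 : ℝ) ∈ Ioo (-π) π := ⟨by linarith [pi_pos], pi_pos⟩
  have hQ := (hFa.deriv.divSin 0 h0).continuousAt
  have hF2 := (hFa.deriv.deriv 0 h0).continuousAt
  have hF := (hFa 0 h0).continuousAt
  -- written with `divSin`, both sides of the equation are continuous at `0`
  have hlhs : ContinuousAt
      (fun r => deriv (deriv F) r + 2 * m * (cos r : ℂ) * divSin (deriv F) r) 0 := by
    fun_prop
  have hrhs : ContinuousAt (fun r => ν * F r) 0 := by fun_prop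
  have hev : (fun r => deriv (deriv F) r + 2 * m * (cos r : ℂ) * divSin (deriv F) r)
      =ᶠ[𝓝[≠] 0] fun r => ν * F r := by
    filter_upwards [nhdsWithin_le_nhds (isOpen_Ioo.mem_nhds h0), self_mem_nhdsWithin]
      with r hr hr0
    rw [← hode r hr hr0, radialLap, divSin_of_ne hFe.deriv.map_zero hr0]
    ring
  have key := ((hlhs.eventuallyEq_nhds_iff_eventuallyEq_nhdsNE hrhs).mp hev).eq_of_nhds
  simp only [divSin_zero, cos_zero, Complex.ofReal_one, mul_one] at key
  have hm : (2 * (m : ℂ) + 1) ≠ 0 := by exact_mod_cast (by positivity : (2 * (m : ℝ) + 1) ≠ 0)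
  rw [LsphExt, divSin_zero]
  field_simp
  linear_combination -key

theorem radialLap_LsphExt {F : ℝ → ℂ} {m : ℕ} {ν : ℂ} (hFa : AnalyticOnNhd ℝ F (Ioo (-π) π))
    (hFe : F.Even) (hode : ∀ r ∈ Ioo (-π) π, r ≠ 0 → radialLap m F r = ν * F r)
    {r : ℝ} (hr : r ∈ Ioo (-π) π) (hr0 : r ≠ 0) :
    radialLap (m + 1) (LsphExt F) r = (ν + 2 * m + 1) * LsphExt F r := by
  have hsin : sin r ≠ 0 := fun h => hr0 ((sin_eq_zero_iff_of_lt_of_lt hr.1 hr.2).mp h)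
  have hU : Ioo (-π) π \ {0} ∈ 𝓝 r :=
    (isOpen_Ioo.sdiff isClosed_singleton).mem_nhds ⟨hr, hr0⟩
  have hext : LsphExt F =ᶠ[𝓝 r] Lsph F :=
    eventually_of_mem hU fun t ht => LsphExt_eq_Lsph hFe ht.2
  have hodeF : radialLap m F =ᶠ[𝓝 r] fun t => ν * F t :=
    eventually_of_mem hU fun t ht => hode t ht.1 ht.2
  rw [hext.radialLap_eq, hext.eq_of_nhds, radialLap_succ_Lsph m (hFa r hr) hsin, Lsph,
    hodeF.deriv_eq, deriv_const_mul_field', Lsph]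
  ring

theorem Function.Even.LsphExt_iterate {F : ℝ → ℂ} (hF : F.Even) (m : ℕ) :
    (_root_.LsphExt^[m] F).Even := by
  induction m with
  | zero => exact hF
  | succ m ih => rw [Function.iterate_succ_apply']; exact ih.LsphExt

theorem AnalyticOnNhd.LsphExt_iterate {F : ℝ → ℂ} (hF : AnalyticOnNhd ℝ F (Ioo (-π) π))
    (m : ℕ) : AnalyticOnNhd ℝ (_root_.LsphExt^[m] F) (Ioo (-π) π) := by
  induction m with
  | zero => exact hF
  | succ m ih => rw [Function.iterate_succ_apply']; exact ih.LsphExt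

theorem Lsph_iterate_eq_LsphExt_iterate {F : ℝ → ℂ} (hF : F.Even) (m : ℕ) {r : ℝ}
    (hr : r ≠ 0) : Lsph^[m] F r = LsphExt^[m] F r := by
  induction m generalizing r with
  | zero => rfl
  | succ m ih =>
    have hev : Lsph^[m] F =ᶠ[𝓝 r] LsphExt^[m] F :=
      eventually_of_mem (isOpen_ne.mem_nhds hr) fun t ht => ih ht
    rw [Function.iterate_succ_apply', Function.iterate_succ_apply',
      LsphExt_eq_Lsph (hF.LsphExt_iterate m) hr, Lsph, Lsph, hev.deriv_eq]

theorem cln_succ (m : ℕ) (lam : ℝ) :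
    (cln (m + 1) lam : ℂ)
      = -(1 / (2 * (π : ℂ))) * ((lam ^ 2 + m ^ 2) / (2 * m + 1)) * cln m lam := by
  have hπ : 2 * π ≠ 0 := by positivity
  have h : cln (m + 1) lam = -(1 / (2 * π)) * ((lam ^ 2 + m ^ 2) / (2 * m + 1)) * cln m lam := by
    rw [cln, cln, Finset.prod_range_succ, pow_succ, mul_inv]
    field_simp
  rw [h]
  push_cast
  ring

section CoshIterates

variable (lam : ℝ)

theorem even_ofReal_cosh_mul : (fun s => (cosh (lam * s) : ℂ)).Even := fun s => by
  simp only [mul_neg, cosh_neg]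

theorem analyticOnNhd_ofReal_cosh_mul :
    AnalyticOnNhd ℝ (fun s => (cosh (lam * s) : ℂ)) (Ioo (-π) π) :=
  fun _ _ => by fun_prop

theorem radialLap_zero_cosh (r : ℝ) :
    radialLap 0 (fun s => (cosh (lam * s) : ℂ)) r = lam ^ 2 * cosh (lam * r) := by
  have hlin (x : ℝ) : HasDerivAt (fun s => lam * s) lam x := by
    simpa using (hasDerivAt_id x).const_mul lam
  have h1 : deriv (fun s => (cosh (lam * s) : ℂ)) = fun x => ((lam * sinh (lam * x) : ℝ) : ℂ) :=
    funext fun x => by simpa [mul_comm] using ((hlin x).cosh.ofReal_comp).deriv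
  have h2 : HasDerivAt (fun x => ((lam * sinh (lam * x) : ℝ) : ℂ))
      ((lam * (lam * cosh (lam * r)) : ℝ) : ℂ) r := by
    simpa [mul_comm, mul_assoc, mul_left_comm] using (((hlin r).sinh).const_mul lam).ofReal_comp
  rw [radialLap, h1, h2.deriv]
  push_cast
  ring

theorem radialLap_LsphExt_iterate_cosh (m : ℕ) {r : ℝ} (hr : r ∈ Ioo (-π) π) (hr0 : r ≠ 0) :
    radialLap m (LsphExt^[m] fun s => (cosh (lam * s) : ℂ)) r
      = (lam ^ 2 + m ^ 2) * LsphExt^[m] (fun s => (cosh (lam * s) : ℂ)) r := by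
  induction m generalizing r with
  | zero => simpa using radialLap_zero_cosh lam r
  | succ m ih =>
    rw [Function.iterate_succ_apply',
      radialLap_LsphExt ((analyticOnNhd_ofReal_cosh_mul lam).LsphExt_iterate m)
        ((even_ofReal_cosh_mul lam).LsphExt_iterate m) (fun t ht ht0 => ih ht ht0) hr hr0]
    push_cast
    ring

theorem LsphExt_iterate_cosh_zero (m : ℕ) :
    LsphExt^[m] (fun s => (cosh (lam * s) : ℂ)) 0 = cln m lam := by
  induction m with
  | zero => simp [cln]
  | succ m ih =>
    rw [Function.iterate_succ_apply',
      LsphExt_zero ((analyticOnNhd_ofReal_cosh_mul lam).LsphExt_iterate m)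
        ((even_ofReal_cosh_mul lam).LsphExt_iterate m)
        (fun t ht ht0 => radialLap_LsphExt_iterate_cosh lam m ht ht0), ih, cln_succ]

end CoshIterates

theorem stmt_12_general (n : ℕ) (lam : ℝ) (ψ : ℝ → ℂ)
    (hψ : ContDiffOn ℝ (⊤ : ℕ∞) ψ (Set.Ioo (-Real.pi) Real.pi))
    (heven : ∀ r : ℝ, ψ (-r) = ψ r) (h0 : ψ 0 = 1)
    (hode : ∀ r : ℝ, 0 < |r| → |r| < Real.pi →
      deriv (deriv ψ) r + 2 * (n : ℂ) * ((Real.cos r : ℂ) / (Real.sin r : ℂ)) * deriv ψ r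
        = (((lam : ℂ)) ^ 2 + (n : ℂ) ^ 2) * ψ r) :
    ∀ r : ℝ, 0 < |r| → |r| < Real.pi →
      Lsph^[n] (fun s => (Real.cosh (lam * s) : ℂ)) r = (cln n lam : ℂ) * ψ r := by
  intro r hr0 hrπ
  have hF := (analyticOnNhd_ofReal_cosh_mul lam).LsphExt_iterate n
  have hψ' := hψ.deriv_of_isOpen isOpen_Ioo (m := 1) (WithTop.coe_le_coe.mpr le_top)
  rw [Lsph_iterate_eq_LsphExt_iterate (even_ofReal_cosh_mul lam) n (abs_pos.mp hr0)]
  refine eqOn_of_radialLap_eq_of_even (m := n) (ν := lam ^ 2 + n ^ 2)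
    (g := fun s => cln n lam * ψ s)
    (fun x hx => ⟨(hF x hx).differentiableAt, (hF x hx).deriv.differentiableAt⟩) (fun x hx => ?_)
    ((even_ofReal_cosh_mul lam).LsphExt_iterate n) (fun x => by simp only [heven])
    (fun x hx => ?_) (fun x hx => ?_) (by rw [LsphExt_iterate_cosh_zero, h0, mul_one])
    (abs_lt.mp hrπ)
  · have hx' := isOpen_Ioo.mem_nhds hx
    rw [deriv_const_mul_field']
    exact ⟨((hψ.differentiableOn (by simp)).differentiableAt hx').const_mul _,
      ((hψ'.differentiableOn one_ne_zero).differentiableAt hx').const_mul _⟩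
  · rw [radialLap_LsphExt_iterate_cosh lam n ⟨by linarith [hx.1, pi_pos], hx.2⟩ hx.1.ne']
    push_cast
    ring
  · have hx' : x ∈ Ioo (-π) π := ⟨by linarith [hx.1, pi_pos], hx.2⟩
    rw [radialLap_const_mul, radialLap, hode x (abs_pos.mpr hx.1.ne') (abs_lt.mpr hx')]
    push_cast
    ring

/-- `D̃* = L̃^n` maps `cosh (λ r)` to `c_{λ,n} φ_λ(ir)`, where `ψ(r) = φ_λ(ir)` is
the analytically continued spherical function of `H^{2n+1}`. -/
theorem stmt_12 (n : ℕ) (hn : 1 ≤ n) (lam : ℝ) (ψ : ℝ → ℂ)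
    (hψ : ContDiffOn ℝ (⊤ : ℕ∞) ψ (Set.Ioo (-Real.pi) Real.pi))
    (heven : ∀ r : ℝ, ψ (-r) = ψ r) (h0 : ψ 0 = 1)
    (hode : ∀ r : ℝ, 0 < |r| → |r| < Real.pi →
      deriv (deriv ψ) r + 2 * (n : ℂ) * ((Real.cos r : ℂ) / (Real.sin r : ℂ)) * deriv ψ r
        = (((lam : ℂ)) ^ 2 + (n : ℂ) ^ 2) * ψ r) :
    ∀ r : ℝ, 0 < |r| → |r| < Real.pi →
      Lsph^[n] (fun s => (Real.cosh (lam * s) : ℂ)) r = (cln n lam : ℂ) * ψ r :=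
  stmt_12_general n lam ψ hψ heven h0 hode
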